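/- Integrality for grouplike generators: let G be a group generated by elements of finite order, let α : G × G → k× be a normalized 2-cocycle, and let σ(g,h) = α(g,h) t_g t_h / t_{gh} in Frac k[t_g : g ∈ G] be the generic cocycle. Let B ⊆ Frac k[t_g : g ∈ G] be the subalgebra generated by all σ(g,h) and σ(g,h)⁻¹. Then for every g ∈ G of order n, t_g^n = t_1 · (σ(g^{n-1},g)σ(g^{n-2},g)⋯σ(g,g)) / (α(g,g)α(g²,g)⋯α(g^{n-1},g)) ∈ B; consequently every t_g (g ∈ G) is integral over B. -/

import Mathlib

/-!
The product `σ(g^{n-1},g) ⋯ σ(g,g)` telescopes to `α(g,g) ⋯ α(g^{n-1},g) · t_g^n / t_{g^n}`, and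
`t_{g^n} = t_1 = σ(1,1)` when `g^n = 1`; so `t_g^n ∈ B` and `t_g` is integral over `B` for `g` of
finite order. Since `t_{gh} = α(g,h) t_g t_h σ(g,h)⁻¹` with `σ(g,h)⁻¹ ∈ B`, the elements `g` with
`t_g` integral are closed under products, and they contain a generating set closed under inverses.
-/

variable (k : Type*) [Field k]
variable (G : Type*) [Group G]

/-- The image of the indeterminate `t_g` in `Frac k[t_g : g ∈ G]`. -/
noncomputable def t (g : G) : FractionRing (MvPolynomial G k) :=
  algebraMap (MvPolynomial G k) (FractionRing (MvPolynomial G k)) (MvPolynomial.X g)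

/-- The generic cocycle `σ(g,h) = α(g,h) t_g t_h / t_{gh}`. -/
noncomputable def genCocycle (α : G → G → kˣ) (g h : G) :
    FractionRing (MvPolynomial G k) :=
  algebraMap k (FractionRing (MvPolynomial G k)) (α g h : k) * t k G g * t k G h / t k G (g * h)

/-- The generic base algebra `B`, generated by the values of the generic cocycle `σ`
and their inverses. -/
noncomputable def Bgen (α : G → G → kˣ) : Subalgebra k (FractionRing (MvPolynomial G k)) :=
  Algebra.adjoin k
    ({z | ∃ g h : G, z = genCocycle k G α g h} ∪
     {z | ∃ g h : G, z = (genCocycle k G α g h)⁻¹})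

section GenericCocycle

variable {k G}

omit [Group G] in
lemma t_ne_zero (g : G) : t k G g ≠ 0 :=
  (map_ne_zero_iff _ (IsFractionRing.injective (MvPolynomial G k) _)).2 (MvPolynomial.X_ne_zero g)

variable {α : G → G → kˣ}

lemma genCocycle_mem_Bgen (g h : G) : genCocycle k G α g h ∈ Bgen k G α :=
  Algebra.subset_adjoin (Or.inl ⟨g, h, rfl⟩)

lemma inv_genCocycle_mem_Bgen (g h : G) : (genCocycle k G α g h)⁻¹ ∈ Bgen k G α :=
  Algebra.subset_adjoin (Or.inr ⟨g, h, rfl⟩)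

lemma isIntegral_of_mem_Bgen {x : FractionRing (MvPolynomial G k)} (hx : x ∈ Bgen k G α) :
    IsIntegral (Bgen k G α) x :=
  isIntegral_algebraMap (x := (⟨x, hx⟩ : Bgen k G α))

lemma t_one_eq_genCocycle (hα : α 1 1 = 1) : t k G 1 = genCocycle k G α 1 1 := by
  have := t_ne_zero (k := k) (1 : G)
  simp only [genCocycle, hα, Units.val_one, map_one, one_mul, mul_one]
  field_simp

lemma t_one_mem_Bgen (hα : α 1 1 = 1) : t k G 1 ∈ Bgen k G α :=
  t_one_eq_genCocycle hα ▸ genCocycle_mem_Bgen 1 1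

lemma prod_genCocycle_pow (g : G) (m : ℕ) :
    ∏ j ∈ Finset.Icc 1 m, genCocycle k G α (g ^ j) g =
      algebraMap k _ (∏ j ∈ Finset.Icc 1 m, (α (g ^ j) g : k)) * t k G g ^ (m + 1) /
        t k G (g ^ (m + 1)) := by
  induction m with
  | zero => simp [t_ne_zero g]
  | succ m ih =>
    rw [Finset.prod_Icc_succ_top (by omega), Finset.prod_Icc_succ_top (by omega), ih,
      genCocycle, ← pow_succ, map_mul]
    have := t_ne_zero (k := k) (g ^ (m + 1))
    field_simp
    ring

lemma t_pow_orderOf_eq (g : G) (n : ℕ) (hn : 0 < n) (hg : orderOf g = n) :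
    t k G g ^ n =
      t k G 1 * (∏ j ∈ Finset.Icc 1 (n - 1), genCocycle k G α (g ^ j) g) /
        algebraMap k _ (∏ j ∈ Finset.Icc 1 (n - 1), (α (g ^ j) g : k)) := by
  have hA : algebraMap k (FractionRing (MvPolynomial G k))
      (∏ j ∈ Finset.Icc 1 (n - 1), (α (g ^ j) g : k)) ≠ 0 := by
    simp [Finset.prod_ne_zero_iff]
  have := t_ne_zero (k := k) (1 : G)
  have hgn : g ^ n = 1 := hg ▸ pow_orderOf_eq_one g
  rw [prod_genCocycle_pow, Nat.sub_add_cancel hn, hgn]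
  field_simp

lemma t_pow_orderOf_mem_Bgen (hα : α 1 1 = 1) (g : G) (n : ℕ) (hn : 0 < n)
    (hg : orderOf g = n) : t k G g ^ n ∈ Bgen k G α := by
  rw [t_pow_orderOf_eq g n hn hg, div_eq_mul_inv, ← map_inv₀]
  exact mul_mem (mul_mem (t_one_mem_Bgen hα) (prod_mem fun j _ => genCocycle_mem_Bgen _ _))
    (Subalgebra.algebraMap_mem _ _)

lemma t_mul_eq (g h : G) :
    t k G (g * h) = algebraMap k _ (α g h : k) * t k G g * t k G h * (genCocycle k G α g h)⁻¹ := by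
  have := t_ne_zero (k := k) (g * h)
  have := t_ne_zero (k := k) g
  have := t_ne_zero (k := k) h
  have : algebraMap k (FractionRing (MvPolynomial G k)) (α g h : k) ≠ 0 := by simp
  rw [genCocycle]
  field_simp

lemma isIntegral_t_mul {g h : G} (hg : IsIntegral (Bgen k G α) (t k G g))
    (hh : IsIntegral (Bgen k G α) (t k G h)) : IsIntegral (Bgen k G α) (t k G (g * h)) := by
  rw [t_mul_eq]
  exact (((isIntegral_of_mem_Bgen (Subalgebra.algebraMap_mem _ _)).mul hg).mul hh).mul
    (isIntegral_of_mem_Bgen (inv_genCocycle_mem_Bgen g h))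

lemma isIntegral_t_of_isOfFinOrder (hα : α 1 1 = 1) {g : G} (hg : IsOfFinOrder g) :
    IsIntegral (Bgen k G α) (t k G g) :=
  IsIntegral.of_pow hg.orderOf_pos
    (isIntegral_of_mem_Bgen (t_pow_orderOf_mem_Bgen hα g _ hg.orderOf_pos rfl))

end GenericCocycle

theorem t_integral_over_B (α : G → G → kˣ)
    (hgen : Subgroup.closure {g : G | ∃ n : ℕ, 0 < n ∧ g ^ n = 1} = ⊤)
    (hnorm : ∀ g : G, α g 1 = 1 ∧ α 1 g = 1) :
    (∀ (g : G) (n : ℕ), 0 < n → orderOf g = n →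
      (t k G g ^ n =
        t k G 1 * (∏ j ∈ Finset.Icc 1 (n - 1), genCocycle k G α (g ^ j) g) /
          algebraMap k (FractionRing (MvPolynomial G k))
            (∏ j ∈ Finset.Icc 1 (n - 1), (α (g ^ j) g : k)) ∧
       t k G g ^ n ∈ Bgen k G α)) ∧
    ∀ g : G, IsIntegral (Bgen k G α) (t k G g) := by
  have hα : α 1 1 = 1 := (hnorm 1).1
  refine ⟨fun g n hn hg => ⟨t_pow_orderOf_eq g n hn hg, t_pow_orderOf_mem_Bgen hα g n hn hg⟩,
    fun g => ?_⟩
  have hg : g ∈ Subgroup.closure {g : G | ∃ n : ℕ, 0 < n ∧ g ^ n = 1} := hgen ▸ Subgroup.mem_top g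
  induction hg using Subgroup.closure_induction'' with
  | mem x hx => exact isIntegral_t_of_isOfFinOrder hα (isOfFinOrder_iff_pow_eq_one.2 hx)
  | inv_mem x hx =>
    exact isIntegral_t_of_isOfFinOrder hα (isOfFinOrder_iff_pow_eq_one.2 hx).inv
  | one => exact isIntegral_t_of_isOfFinOrder hα IsOfFinOrder.one
  | mul x y _ _ hx hy => exact isIntegral_t_mul hx hy
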